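/- arXiv:2012.07317 — 3 statements merged into one kernel-verified Lean document; each statement's English description precedes it below -/
import Mathlib

section
/- Let p : I₁ × ⋯ × I_K → ℝ be a probability distribution on a product of finite index sets (nonneg, sums to 1). For each α, let p^α denote the α-th marginal. If for every α the maximum of p^α is strictly greater than K/(K+1), then the (unique) index tuple maximizing p equals the tuple whose α-th coordinate maximizes p^α. -/
/-!
Write `m α` for the mass of the tuples whose `α`-th coordinate is `iopt α`, so `m α > K/(K+1)`.
A tuple `j ≠ iopt` differs from `iopt` in some coordinate `α`, hence `p j ≤ 1 - m α < 1/(K+1)`.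
On the other hand, by the union bound the tuples other than `iopt` carry mass at most
`∑ α, (1 - m α) ≤ K/(K+1)`, so `p iopt ≥ 1/(K+1)`.
-/

open Finset

namespace Finset

theorem sum_biUnion_le_sum_sum {ι β M : Type*} [DecidableEq β] [AddCommMonoid M] [PartialOrder M]
    [IsOrderedAddMonoid M] {f : β → M} (hf : ∀ b, 0 ≤ f b) (s : Finset ι) (t : ι → Finset β) :
    ∑ b ∈ s.biUnion t, f b ≤ ∑ i ∈ s, ∑ b ∈ t i, f b := by
  rw [← sup_eq_biUnion]
  refine apply_sup_le_sum (f := fun u => ∑ b ∈ u, f b) sum_empty (fun {u v} => ?_) s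
  calc ∑ b ∈ u ∪ v, f b ≤ ∑ b ∈ u ∪ v, f b + ∑ b ∈ u ∩ v, f b :=
        le_add_of_nonneg_right (sum_nonneg fun b _ => hf b)
    _ = ∑ b ∈ u, f b + ∑ b ∈ v, f b := sum_union_inter

end Finset

section ProbabilityVector

variable {ι κ : Type*} [Fintype ι] {p : ι → ℝ}

theorem sum_filter_not_eq_one_sub (hsum : ∑ j, p j = 1) (P : ι → Prop) [DecidablePred P] :
    ∑ j ∈ univ.filter (¬P ·), p j = 1 - ∑ j ∈ univ.filter P, p j := by
  rw [← hsum, ← sum_filter_not_add_sum_filter univ P p, add_sub_cancel_right]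

theorem le_one_sub_sum_filter_of_not (hp : ∀ j, 0 ≤ p j) (hsum : ∑ j, p j = 1)
    {P : ι → Prop} [DecidablePred P] {j : ι} (hj : ¬P j) :
    p j ≤ 1 - ∑ i ∈ univ.filter P, p i := by
  rw [← sum_filter_not_eq_one_sub hsum]
  exact single_le_sum (fun i _ => hp i) (mem_filter.mpr ⟨mem_univ j, hj⟩)

theorem one_sub_sum_one_sub_sum_filter_le [Fintype κ] (hp : ∀ j, 0 ≤ p j)
    (hsum : ∑ j, p j = 1) (P : κ → ι → Prop) [∀ a, DecidablePred (P a)] {x : ι}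
    (hx : ∀ j, (∀ a, P a j) → j = x) :
    1 - ∑ a, (1 - ∑ j ∈ univ.filter (P a), p j) ≤ p x := by
  classical
  have hcover : univ.erase x ⊆ univ.biUnion fun a => univ.filter (¬P a ·) := by
    intro j hj
    obtain ⟨a, ha⟩ : ∃ a, ¬P a j := by
      by_contra! h
      exact ne_of_mem_erase hj (hx j h)
    exact mem_biUnion.mpr ⟨a, mem_univ a, mem_filter.mpr ⟨mem_univ j, ha⟩⟩
  have hunion : 1 - p x ≤ ∑ a, (1 - ∑ j ∈ univ.filter (P a), p j) := by
    calc 1 - p x = ∑ j ∈ univ.erase x, p j := by rw [sum_erase_eq_sub (mem_univ x), hsum]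
      _ ≤ ∑ j ∈ univ.biUnion fun a => univ.filter (¬P a ·), p j :=
        sum_le_sum_of_subset_of_nonneg hcover fun j _ _ => hp j
      _ ≤ ∑ a, ∑ j ∈ univ.filter (¬P a ·), p j := sum_biUnion_le_sum_sum hp _ _
      _ = ∑ a, (1 - ∑ j ∈ univ.filter (P a), p j) := by
        simp only [sum_filter_not_eq_one_sub hsum]
  linarith

end ProbabilityVector

theorem stmt_0_general {K : ℕ} (I : Fin K → Type)
    [∀ α, Fintype (I α)] [∀ α, DecidableEq (I α)]
    (p : (∀ α, I α) → ℝ) (hp : ∀ j, 0 ≤ p j) (hsum : ∑ j, p j = 1)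
    (iopt : ∀ α, I α)
    (hmarg : ∀ α : Fin K,
      (K : ℝ) / (K + 1) <
        ∑ j ∈ Finset.univ.filter (fun j : ∀ α, I α => j α = iopt α), p j) :
    ∀ j, p j ≤ p iopt := by
  intro j
  rcases eq_or_ne j iopt with rfl | hj
  · exact le_rfl
  obtain ⟨α, hα⟩ := Function.ne_iff.mp hj
  have hpj : p j < 1 - K / (K + 1) :=
    (le_one_sub_sum_filter_of_not hp hsum hα).trans_lt (sub_lt_sub_left (hmarg α) 1)
  have hpopt : 1 - ∑ _α : Fin K, (1 - (K : ℝ) / (K + 1)) ≤ p iopt := by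
    refine le_trans ?_ (one_sub_sum_one_sub_sum_filter_le hp hsum
      (fun α j => j α = iopt α) (fun j hj => funext hj))
    gcongr with α
    exact (hmarg α).le
  have hmass : 1 - ∑ _α : Fin K, (1 - (K : ℝ) / (K + 1)) = 1 - K / (K + 1) := by
    simp only [sum_const, card_univ, Fintype.card_fin, nsmul_eq_mul]
    field_simp
    ring
  exact hpj.le.trans (hmass ▸ hpopt)

/-- Parallel decoding theorem: if every marginal of a probability distribution on a
product of finite index sets has its maximum value strictly greater than `K/(K+1)`,
then the joint distribution attains its global maximum at the tuple of marginal
maximizers. -/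
theorem stmt_0 {K : ℕ} (hK : 1 ≤ K) (I : Fin K → Type)
    [∀ α, Fintype (I α)] [∀ α, Nonempty (I α)] [∀ α, DecidableEq (I α)]
    (p : (∀ α, I α) → ℝ) (hp : ∀ j, 0 ≤ p j) (hsum : ∑ j, p j = 1)
    (iopt : ∀ α, I α)
    (hmarg : ∀ α : Fin K,
      (K : ℝ) / (K + 1) <
        ∑ j ∈ Finset.univ.filter (fun j : ∀ α, I α => j α = iopt α), p j) :
    ∀ j, p j ≤ p iopt :=
  stmt_0_general I p hp hsum iopt hmarg
end

section
/- Special case K = 2 of the parallel-decoding theorem: let p be a probability distribution on I × J with marginals p¹, p². If p¹(i₀) > 2/3 and p²(j₀) > 2/3, then p attains its (unique) maximum at (i₀, j₀). -/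
open Finset

/-- Special case `K = 2` of the parallel-decoding theorem: if both marginals of a
probability distribution on `I × J` exceed `2/3` at `i₀` resp. `j₀`, then the joint
distribution attains its unique maximum at `(i₀, j₀)`. -/
theorem stmt_3 {I J : Type} [Fintype I] [Fintype J]
    (p : I × J → ℝ) (hp : ∀ x, 0 ≤ p x) (hsum : ∑ x, p x = 1)
    (i₀ : I) (j₀ : J)
    (h1 : (2 : ℝ) / 3 < ∑ j, p (i₀, j))
    (h2 : (2 : ℝ) / 3 < ∑ i, p (i, j₀)) :
    ∀ x : I × J, x ≠ (i₀, j₀) → p x < p (i₀, j₀) := by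
  classical
  set A : Finset (I × J) := ({i₀} : Finset I) ×ˢ (univ : Finset J) with hA
  set B : Finset (I × J) := (univ : Finset I) ×ˢ ({j₀} : Finset J) with hB
  have hAsum : ∑ x ∈ A, p x = ∑ j, p (i₀, j) := by
    rw [hA, Finset.sum_product, Finset.sum_singleton]
  have hBsum : ∑ x ∈ B, p x = ∑ i, p (i, j₀) := by
    rw [hB, Finset.sum_product_right, Finset.sum_singleton]
  have hABi : A ∩ B = {(i₀, j₀)} := by
    ext x
    simp [hA, hB, Prod.ext_iff, eq_comm]
  have hunion : ∑ x ∈ A ∪ B, p x ≤ 1 := by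
    rw [← hsum]
    exact Finset.sum_le_sum_of_subset_of_nonneg (Finset.subset_univ _)
      (fun x _ _ => hp x)
  have key : p (i₀, j₀) > 1 / 3 := by
    have := Finset.sum_union_inter (s₁ := A) (s₂ := B) (f := p)
    rw [hABi, Finset.sum_singleton, hAsum, hBsum] at this
    linarith
  rintro ⟨i, j⟩ hx
  rw [Ne, Prod.mk.injEq, not_and_or] at hx
  have hsmall : p (i, j) < 1 / 3 := by
    rcases hx with hi | hj
    · have hpair : ∑ k ∈ ({i₀, i} : Finset I), ∑ j', p (k, j') ≤ ∑ k, ∑ j', p (k, j') :=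
        Finset.sum_le_sum_of_subset_of_nonneg (Finset.subset_univ _)
          (fun k _ _ => Finset.sum_nonneg fun j' _ => hp _)
      rw [Finset.sum_pair (Ne.symm hi)] at hpair
      have htot : ∑ k, ∑ j', p (k, j') = 1 := by
        rw [← Fintype.sum_prod_type]; exact hsum
      have hle : p (i, j) ≤ ∑ j', p (i, j') :=
        Finset.single_le_sum (fun j' _ => hp _) (Finset.mem_univ j)
      linarith
    · have hpair : ∑ k ∈ ({j₀, j} : Finset J), ∑ i', p (i', k) ≤ ∑ k, ∑ i', p (i', k) :=
        Finset.sum_le_sum_of_subset_of_nonneg (Finset.subset_univ _)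
          (fun k _ _ => Finset.sum_nonneg fun i' _ => hp _)
      rw [Finset.sum_pair (Ne.symm hj)] at hpair
      have htot : ∑ k, ∑ i', p (i', k) = 1 := by
        rw [← hsum, Fintype.sum_prod_type]; exact Finset.sum_comm
      have hle : p (i, j) ≤ ∑ i', p (i', j) :=
        Finset.single_le_sum (f := fun i' => p (i', j)) (fun i' _ => hp _) (Finset.mem_univ i)
      linarith
  linarith
end

section
/- Optimality of the bound K/(K+1): for every K ≥ 1 and every ε with 0 < ε < 1/(K+1), there exists a probability distribution p on (Fin 2)^K such that every marginal satisfies max_i p^α(i) ≥ K/(K+1) − ε, yet the tuple of marginal maximizers (0,…,0) is not a global maximizer of p. -/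
open Finset

/-- Optimality of the bound `K/(K+1)`: for every `K ≥ 1` and `0 < ε < 1/(K+1)` there
is a probability distribution on `{0,1}^K` whose marginals all have maximum at least
`K/(K+1) − ε`, yet the all-zeros tuple is not a global maximizer. -/
theorem stmt_5 (K : ℕ) (hK : 1 ≤ K) (ε : ℝ) (hε : 0 < ε) (hε' : ε < 1 / (K + 1)) :
    ∃ p : (Fin K → Fin 2) → ℝ,
      (∀ j, 0 ≤ p j) ∧ (∑ j, p j = 1) ∧
      (∀ α : Fin K,
        (K : ℝ) / (K + 1) - ε ≤
          ∑ j ∈ Finset.univ.filter (fun j : Fin K → Fin 2 => j α = 0), p j) ∧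
      (∃ j : Fin K → Fin 2, p (fun _ => 0) < p j) := by
  have hK0 : (0:ℝ) < K := by exact_mod_cast hK
  have hK1 : (0:ℝ) < (K:ℝ) + 1 := by linarith
  set a : ℝ := 1/((K:ℝ)+1) - ε with ha
  set b : ℝ := 1/((K:ℝ)+1) + ε/K with hb
  have ha0 : 0 ≤ a := by
    rw [ha]
    have : ε < 1/((K:ℝ)+1) := by push_cast at hε' ⊢; linarith
    linarith
  have hb0 : 0 ≤ b := by
    rw [hb]
    have h1 : 0 < 1/((K:ℝ)+1) := by positivity
    have h2 : 0 ≤ ε/K := by positivity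
    linarith
  have hab : a < b := by
    rw [ha, hb]
    have : 0 < ε/K := by positivity
    linarith
  set e : Fin K → (Fin K → Fin 2) := fun α β => if β = α then 1 else 0 with he
  have hene : ∀ α, e α ≠ (fun _ => (0:Fin 2)) := by
    intro α h
    have := congrFun h α
    simp [he] at this
  have heval : ∀ α β : Fin K, e β α = 0 ↔ α ≠ β := by
    intro α β
    simp only [he]
    by_cases h : α = β <;> simp [h]
  refine ⟨fun j => (if j = (fun _ => (0:Fin 2)) then a else 0) +
      ∑ α, (if j = e α then b else 0), ?_, ?_, ?_, ?_⟩
  · intro j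
    have h1 : 0 ≤ (if j = (fun _ => (0:Fin 2)) then a else 0) := by positivity
    have h2 : 0 ≤ ∑ α, (if j = e α then b else 0) := by
      apply Finset.sum_nonneg; intro α _; positivity
    dsimp only
    linarith
  · rw [Finset.sum_add_distrib, Finset.sum_comm]
    simp only [Finset.sum_ite_eq', Finset.mem_univ, if_true]
    rw [Finset.sum_const, Finset.card_univ, Fintype.card_fin, nsmul_eq_mul]
    rw [ha, hb]
    field_simp
    ring
  · intro α
    rw [Finset.sum_add_distrib, Finset.sum_comm]
    have hz : (fun _ => (0:Fin 2)) ∈ Finset.univ.filter (fun j : Fin K → Fin 2 => j α = 0) := by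
      simp
    rw [Finset.sum_ite_eq' _ _ (fun _ => a), if_pos hz]
    have hstep : ∀ β : Fin K,
        (∑ j ∈ Finset.univ.filter (fun j : Fin K → Fin 2 => j α = 0),
          if j = e β then b else 0) = if α = β then 0 else b := by
      intro β
      rw [Finset.sum_ite_eq' _ _ (fun _ => b)]
      by_cases h : α = β
      · rw [if_pos h, if_neg]
        simp only [Finset.mem_filter, Finset.mem_univ, true_and]
        rw [heval]
        simp [h]
      · rw [if_neg h, if_pos]
        simp only [Finset.mem_filter, Finset.mem_univ, true_and]
        rw [heval]
        exact h
    rw [Finset.sum_congr rfl (fun β _ => hstep β)]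
    have : (∑ β : Fin K, if α = β then 0 else b) = (K:ℝ)*b - b := by
      have : ∀ β : Fin K, (if α = β then (0:ℝ) else b) = b - (if α = β then b else 0) := by
        intro β; by_cases h : α = β <;> simp [h]
      rw [Finset.sum_congr rfl (fun β _ => this β), Finset.sum_sub_distrib]
      simp [Finset.card_univ, mul_comm]
    rw [this, ha, hb]
    have hεK : ε/K ≤ ε := by
      rw [div_le_iff₀ hK0]
      have hK1' : (1:ℝ) ≤ K := by exact_mod_cast hK
      nlinarith [mul_le_mul_of_nonneg_left hK1' hε.le]
    have : (K:ℝ)/((K:ℝ)+1) - ε/K = a + ((K:ℝ)*b - b) := by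
      rw [ha, hb]; field_simp; ring
    rw [ha, hb] at this
    linarith [this]
  · refine ⟨e ⟨0, hK⟩, ?_⟩
    have h1 : (if (fun _ : Fin K => (0:Fin 2)) = (fun _ : Fin K => (0:Fin 2)) then a else 0) = a := by simp
    have h2 : (∑ α, (if (fun _ : Fin K => (0:Fin 2)) = e α then b else 0)) = 0 := by
      apply Finset.sum_eq_zero; intro α _
      rw [if_neg]; exact fun h => hene α h.symm
    have h3 : (if e ⟨0, hK⟩ = (fun _ : Fin K => (0:Fin 2)) then a else 0) = 0 := by
      rw [if_neg (hene _)]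
    have h4 : (∑ α, (if e ⟨0, hK⟩ = e α then b else 0)) = b := by
      have heinj : Function.Injective e := by
        intro α β h
        have := congrFun h α
        simp only [he, if_pos rfl] at this
        by_contra hne
        rw [if_neg (fun h' : α = β => hne h')] at this
        exact one_ne_zero this
      rw [Finset.sum_eq_single ⟨0, hK⟩]
      · simp
      · intro β _ hβ
        rw [if_neg (fun h => hβ (heinj h).symm)]
      · simp
    dsimp only
    rw [h1, h2, h3, h4]
    linarith
end
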